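/- arXiv:2106.06386 — 2 statements merged into one kernel-verified Lean document; each statement's English description precedes it below -/
import Mathlib

section
/- With the construction data as in the context, for every N ≥ 1 the subspace B_N is a rational subspace of ℝ^{2ℓ} of dimension ℓ and its height satisfies H(B_N) ≤ (2(2ℓ+1)√(2ℓ))^ℓ · (θ^⌊α^N⌋)^ℓ. -/
open scoped BigOperators ENNReal

noncomputable section

/-- A vector of `ℝⁿ` has rational coordinates. -/
def IsRatVec {n : ℕ} (v : EuclideanSpace ℝ (Fin n)) : Prop := ∀ i, ∃ q : ℚ, v i = (q : ℝ)

/-- A vector of `ℝⁿ` has integer coordinates. -/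
def IsIntVec {n : ℕ} (v : EuclideanSpace ℝ (Fin n)) : Prop := ∀ i, ∃ z : ℤ, v i = (z : ℝ)

/-- A subspace of `ℝⁿ` is rational if it is spanned by vectors with rational coordinates. -/
def IsRationalSubspace {n : ℕ} (B : Submodule ℝ (EuclideanSpace ℝ (Fin n))) : Prop :=
  ∃ S : Set (EuclideanSpace ℝ (Fin n)), (∀ v ∈ S, IsRatVec v) ∧ Submodule.span ℝ S = B

/-- `v` is a `ℤ`-basis of the lattice `B ∩ ℤⁿ`. -/
def IsZBasisOf {n e : ℕ} (B : Submodule ℝ (EuclideanSpace ℝ (Fin n)))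
    (v : Fin e → EuclideanSpace ℝ (Fin n)) : Prop :=
  (∀ i, v i ∈ B ∧ IsIntVec (v i)) ∧
    ∀ x : EuclideanSpace ℝ (Fin n), x ∈ B → IsIntVec x →
      ∃! c : Fin e → ℤ, x = ∑ i, (c i : ℝ) • v i

/-- Generalised determinant `√(det(ᵀM·M))` of a family of vectors, i.e. the norm
`‖v₁ ∧ ⋯ ∧ v_e‖` of their exterior product (square root of the Gram determinant). -/
def gramDet {n e : ℕ} (v : Fin e → EuclideanSpace ℝ (Fin n)) : ℝ :=
  Real.sqrt (Matrix.det (Matrix.of fun i j => (inner ℝ (v i) (v j) : ℝ)))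

/-- Height of a rational subspace: `√(det(ᵀM·M))` for `M` a matrix whose columns form a
`ℤ`-basis of `B ∩ ℤⁿ` (this value is independent of the chosen basis). -/
def height {n : ℕ} (B : Submodule ℝ (EuclideanSpace ℝ (Fin n))) : ℝ :=
  sSup {h : ℝ | ∃ (e : ℕ) (v : Fin e → EuclideanSpace ℝ (Fin n)), IsZBasisOf B v ∧ h = gramDet v}

/-- `ψ(X,Y)`, the sine of the angle between `X` and `Y`. -/
def psiVec {n : ℕ} (X Y : EuclideanSpace ℝ (Fin n)) : ℝ :=
  Real.sqrt (‖X‖ ^ 2 * ‖Y‖ ^ 2 - (inner ℝ X Y : ℝ) ^ 2) / (‖X‖ * ‖Y‖)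

/-- `ψⱼ(A,B)`, the `j`-th canonical angle between the subspaces `A` and `B`. -/
def psiSub {n : ℕ} (j : ℕ) (A B : Submodule ℝ (EuclideanSpace ℝ (Fin n))) : ℝ :=
  sInf {l : ℝ | 0 ≤ l ∧ ∃ Aj : Submodule ℝ (EuclideanSpace ℝ (Fin n)), Aj ≤ A ∧
    Module.finrank ℝ Aj = j ∧ ∀ X ∈ Aj, X ≠ 0 → ∃ Y ∈ B, Y ≠ 0 ∧ psiVec X Y ≤ l}

/-- `A` is `(e,j)`-irrational: `dim (A ∩ B) < j` for every rational subspace `B` of dim `e`. -/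
def IsIrrational {n : ℕ} (e j : ℕ) (A : Submodule ℝ (EuclideanSpace ℝ (Fin n))) : Prop :=
  ∀ B : Submodule ℝ (EuclideanSpace ℝ (Fin n)), IsRationalSubspace B →
    Module.finrank ℝ B = e → Module.finrank ℝ ↥(A ⊓ B) < j

/-- The exponent of approximation `μₙ(A|e)ⱼ ∈ [0,∞]`. -/
def mu {n : ℕ} (e j : ℕ) (A : Submodule ℝ (EuclideanSpace ℝ (Fin n))) : ℝ≥0∞ :=
  sSup {x : ℝ≥0∞ | ∃ β : ℝ, 0 < β ∧ x = ENNReal.ofReal β ∧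
    {B : Submodule ℝ (EuclideanSpace ℝ (Fin n)) | IsRationalSubspace B ∧
      Module.finrank ℝ B = e ∧ psiSub j A B ≤ height B ^ (-β)}.Infinite}

/-- `μ̂ₙ(d|e)ⱼ = inf {μₙ(A|e)ⱼ : A ∈ 𝔍ₙ(d,e)ⱼ}`. -/
def muHat (n d e j : ℕ) : ℝ≥0∞ :=
  sInf (mu e j '' {A : Submodule ℝ (EuclideanSpace ℝ (Fin n)) |
    Module.finrank ℝ A = d ∧ IsIrrational e j A})

/-!
The columns `X_j` of `B_N` have integer coordinates, and their top block `θ^⌊α^N⌋ · I` makes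
them independent, so `B_N` is rational of dimension `ℓ` and `B_N ∩ ℤ^{2ℓ}` contains the full-rank
lattice they span: `H(B_N) ≤ √(det Gram(X))`. Each entry of `F_N` is a base-`θ` expansion with
digits at most `2ℓ + 1 < θ` and fewer than `⌊α^N⌋` digits, so every coordinate of every `X_j` lies
in `[0, θ^⌊α^N⌋]`, and the crude bound `|det G| ≤ ℓ! · (max |Gᵢⱼ|)^ℓ` on the Gram matrix finishes.
-/

open Finset Matrix
open scoped Nat

lemma floor_pow_strictMono {α : ℝ} (hα : 2 ≤ α) : StrictMono fun k : ℕ => ⌊α ^ k⌋₊ := by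
  refine strictMono_nat_of_lt_succ fun k => ?_
  have hone : (1 : ℝ) ≤ α ^ k := one_le_pow₀ (by linarith)
  have hstep : α ^ k + 1 ≤ α ^ (k + 1) := by rw [pow_succ]; nlinarith
  calc ⌊α ^ k⌋₊ < ⌊α ^ k⌋₊ + 1 := Nat.lt_succ_self _
    _ = ⌊α ^ k + 1⌋₊ := (Nat.floor_add_one (by linarith)).symm
    _ ≤ ⌊α ^ (k + 1)⌋₊ := Nat.floor_le_floor hstep

lemma sum_mul_pow_lt_pow {ι : Type*} {s : Finset ι} {g : ι → ℕ} {c : ι → ℕ} {b m : ℕ}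
    (hb : 0 < b) (hg : Set.InjOn g s) (hgm : ∀ k ∈ s, g k < m) (hc : ∀ k ∈ s, c k < b) :
    ∑ k ∈ s, c k * b ^ g k < b ^ m := by
  obtain ⟨t, rfl⟩ := Nat.exists_eq_succ_of_ne_zero hb.ne'
  calc ∑ k ∈ s, c k * (t + 1) ^ g k ≤ ∑ k ∈ s, t * (t + 1) ^ g k :=
        sum_le_sum fun k hk => Nat.mul_le_mul_right _ (by have := hc k hk; omega)
    _ = ∑ e ∈ s.image g, t * (t + 1) ^ e := (sum_image (f := fun e => t * (t + 1) ^ e) hg).symm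
    _ ≤ ∑ e ∈ range m, t * (t + 1) ^ e :=
        sum_le_sum_of_subset (by simpa [Finset.subset_iff] using hgm)
    _ < (t + 1) ^ m := by
        rw [← mul_sum, ← geom_sum_mul_add t m, mul_comm]; omega

/-- A base-`b` expansion with digits `c k < b`: the exponents `⌊α^N⌋ - ⌊α^k⌋`, `k ≤ N`, are
distinct and smaller than `⌊α^N⌋`. -/
lemma sum_mul_pow_floor_sub_lt {α : ℝ} (hα : 2 ≤ α) {b : ℕ} (hb : 0 < b) {c : ℕ → ℕ}
    (hc : ∀ k, c k < b) (N : ℕ) :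
    ∑ k ∈ range (N + 1), c k * b ^ (⌊α ^ N⌋₊ - ⌊α ^ k⌋₊) < b ^ ⌊α ^ N⌋₊ := by
  have hmono := floor_pow_strictMono hα
  have hpos : ∀ k, 1 ≤ ⌊α ^ k⌋₊ := fun k => Nat.le_floor (by
    simpa using one_le_pow₀ (M₀ := ℝ) (by linarith : (1 : ℝ) ≤ α) (n := k))
  have hle : ∀ k ∈ range (N + 1), ⌊α ^ k⌋₊ ≤ ⌊α ^ N⌋₊ := fun k hk =>
    hmono.monotone (Nat.lt_succ_iff.mp (mem_range.mp hk))
  refine sum_mul_pow_lt_pow hb (fun k hk k' hk' h => hmono.injective ?_)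
    (fun k _ => by have := hpos k; have := hpos N; omega) (fun k _ => hc k)
  have := hle k hk; have := hle k' hk'
  omega

section Gram

variable {E : Type*} [NormedAddCommGroup E] [InnerProductSpace ℝ E]

lemma gram_eq_mul_gram_mul_transpose {ι κ : Type*} [Fintype ι] (v : ι → E)
    (C : Matrix κ ι ℝ) {X : κ → E} (hX : ∀ j, X j = ∑ i, C j i • v i) :
    gram ℝ X = C * gram ℝ v * Cᵀ := by
  ext j j'
  simp only [gram_apply, mul_apply, transpose_apply, hX, sum_inner, inner_sum,
    real_inner_smul_left, real_inner_smul_right, sum_mul]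
  exact sum_congr rfl fun i _ => sum_congr rfl fun k _ => by rw [real_inner_comm]; ring

/-- `det (gram X) = det C ^ 2 * det (gram v)`, and `det C` is a nonzero integer. -/
lemma det_gram_le_of_eq_intCast_combination {ι : Type*} [Fintype ι] [DecidableEq ι]
    {v X : ι → E} (C : Matrix ι ι ℤ) (hX : ∀ j, X j = ∑ i, (C j i : ℝ) • v i)
    (hli : LinearIndependent ℝ X) : (gram ℝ v).det ≤ (gram ℝ X).det := by
  have hdet : (gram ℝ X).det = (C.det : ℝ) ^ 2 * (gram ℝ v).det := by
    have hcast : (C.map (Int.castRingHom ℝ)).det = C.det := (RingHom.map_det _ C).symm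
    rw [gram_eq_mul_gram_mul_transpose v (C.map (Int.castRingHom ℝ)) hX, det_mul, det_mul,
      det_transpose, hcast]
    ring
  have hC : C.det ≠ 0 := fun h0 =>
    det_gram_ne_zero_iff_linearIndependent.2 hli (by rw [hdet, h0]; simp)
  have hC1 : (1 : ℝ) ≤ (C.det : ℝ) ^ 2 :=
    mod_cast (one_le_sq_iff_one_le_abs _).2 (Int.one_le_abs hC)
  nlinarith [(posSemidef_gram ℝ v).det_nonneg]

end Gram

lemma gramDet_eq_sqrt_det_gram {n e : ℕ} (v : Fin e → EuclideanSpace ℝ (Fin n)) :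
    gramDet v = √(gram ℝ v).det := rfl

lemma IsIntVec.isRatVec {n : ℕ} {v : EuclideanSpace ℝ (Fin n)} (hv : IsIntVec v) :
    IsRatVec v := fun i => by
  obtain ⟨z, hz⟩ := hv i
  exact ⟨z, by rw [hz]; norm_cast⟩

lemma isRationalSubspace_span_range {ι : Type*} {n : ℕ} {X : ι → EuclideanSpace ℝ (Fin n)}
    (hint : ∀ j, IsIntVec (X j)) : IsRationalSubspace (Submodule.span ℝ (Set.range X)) :=
  ⟨Set.range X, by rintro _ ⟨j, rfl⟩; exact (hint j).isRatVec, rfl⟩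

/-- Any `ℤ`-basis `v` of `B ∩ ℤⁿ` spans `B` and has the integer vectors `X` as integer
combinations, so its Gram determinant is at most that of `X`. -/
lemma height_span_le_gramDet {n d : ℕ} {X : Fin d → EuclideanSpace ℝ (Fin n)}
    (hint : ∀ j, IsIntVec (X j)) (hli : LinearIndependent ℝ X) :
    height (Submodule.span ℝ (Set.range X)) ≤ gramDet X := by
  refine Real.sSup_le ?_ (Real.sqrt_nonneg _)
  rintro _ ⟨e, v, ⟨hvB, hvZ⟩, rfl⟩
  by_cases hv : LinearIndependent ℝ v
  swap
  · rw [gramDet_eq_sqrt_det_gram v, not_ne_iff.1 (mt det_gram_ne_zero_iff_linearIndependent.1 hv),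
      Real.sqrt_zero]
    exact Real.sqrt_nonneg _
  choose C hC using fun j => (hvZ (X j) (Submodule.subset_span ⟨j, rfl⟩) (hint j)).exists
  have hspan : Submodule.span ℝ (Set.range v) = Submodule.span ℝ (Set.range X) := by
    refine le_antisymm (Submodule.span_le.2 (Set.range_subset_iff.2 fun i => (hvB i).1))
      (Submodule.span_le.2 (Set.range_subset_iff.2 fun j => ?_))
    rw [hC j]
    exact Submodule.sum_mem _ fun i _ => Submodule.smul_mem _ _ (Submodule.subset_span ⟨i, rfl⟩)
  have hed : e = d := by
    simpa [finrank_span_eq_card hv, finrank_span_eq_card hli] using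
      congrArg (fun W : Submodule ℝ _ => Module.finrank ℝ W) hspan
  subst hed
  exact Real.sqrt_le_sqrt (det_gram_le_of_eq_intCast_combination (Matrix.of C) hC hli)

lemma gramDet_le_of_abs_le {n d : ℕ} {X : Fin d → EuclideanSpace ℝ (Fin n)} {M : ℝ}
    (hM : ∀ j i, |X j i| ≤ M) : gramDet X ≤ √(d ! * (n * M ^ 2) ^ d) := by
  have hentry : ∀ j j', |gram ℝ X j j'| ≤ n * M ^ 2 := fun j j' => by
    rw [gram_apply, PiLp.inner_apply]
    calc |∑ i, inner ℝ (X j i) (X j' i)| ≤ ∑ i, |X j' i * X j i| := by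
          simpa using abs_sum_le_sum_abs (fun i => X j' i * X j i) univ
      _ ≤ ∑ _i : Fin n, M ^ 2 := sum_le_sum fun i _ => by
          rw [abs_mul, sq]
          exact mul_le_mul (hM j' i) (hM j i) (abs_nonneg _) ((abs_nonneg _).trans (hM j' i))
      _ = n * M ^ 2 := by simp
  have hdet := det_le (abv := AbsoluteValue.abs) hentry
  rw [Fintype.card_fin, nsmul_eq_mul] at hdet
  exact Real.sqrt_le_sqrt ((le_abs_self _).trans hdet)

lemma sqrt_factorial_mul_pow_le (ℓ : ℕ) {t : ℝ} (ht : 0 ≤ t) :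
    √(ℓ ! * (2 * ℓ * t ^ 2) ^ ℓ) ≤ (2 * (2 * ℓ + 1) * √(2 * ℓ)) ^ ℓ * t ^ ℓ := by
  have hfac : (ℓ ! : ℝ) ≤ (4 * (2 * ℓ + 1) ^ 2) ^ ℓ := by
    calc (ℓ ! : ℝ) ≤ (ℓ : ℝ) ^ ℓ := by exact_mod_cast Nat.factorial_le_pow ℓ
      _ ≤ _ := pow_le_pow_left₀ (Nat.cast_nonneg _) (by nlinarith) ℓ
  have hsq : (2 * (2 * ℓ + 1) * √(2 * ℓ) * t) ^ 2 = 4 * (2 * ℓ + 1) ^ 2 * (2 * ℓ * t ^ 2) := by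
    rw [mul_pow, mul_pow, Real.sq_sqrt (by positivity)]; ring
  rw [Real.sqrt_le_left (by positivity), ← mul_pow, ← pow_mul, mul_comm ℓ 2, pow_mul, hsq,
    mul_pow (4 * (2 * (ℓ : ℝ) + 1) ^ 2)]
  exact mul_le_mul_of_nonneg_right hfac (by positivity)

lemma linearIndependent_of_apply_eq_ite {ι : Type*} [Fintype ι] [DecidableEq ι] {n : ℕ}
    {X : ι → EuclideanSpace ℝ (Fin n)} (p : ι → Fin n) {c : ℝ} (hc : c ≠ 0)
    (hX : ∀ j j', X j (p j') = if j' = j then c else 0) : LinearIndependent ℝ X := by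
  refine Fintype.linearIndependent_iff.2 fun g hg j => ?_
  have hcoord := congrArg (fun x : EuclideanSpace ℝ (Fin n) => x (p j)) hg
  simp only [WithLp.ofLp_sum, WithLp.ofLp_smul, Finset.sum_apply, Pi.smul_apply, smul_eq_mul,
    hX] at hcoord
  simpa [hc] using hcoord

lemma two_mul_add_one_le_factorial_mul_pow (ℓ : ℕ) : 2 * ℓ + 1 ≤ ℓ ! * (2 * ℓ + 1) ^ ℓ := by
  rcases ℓ.eq_zero_or_pos with rfl | hℓ
  · simp
  · exact (Nat.le_self_pow hℓ.ne' _).trans (Nat.le_mul_of_pos_left _ ℓ.factorial_pos)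

/-- **Claim 4.2.** Each `B_N` is a rational subspace of `ℝ^{2ℓ}` of dimension `ℓ` with
height at most `(2(2ℓ+1)√(2ℓ))^ℓ · (θ^⌊α^N⌋)^ℓ`. -/
theorem statement15
    (ℓ : ℕ) (α : ℝ) (hα : 2 < α) (θ : ℕ)
    (hθ : (Nat.factorial ℓ : ℝ) * (2 * (ℓ : ℝ) + 1) ^ ℓ < (θ : ℝ))
    (E : Fin ℓ → Fin ℓ → ℕ → ℕ)
    (hE : ∀ i j k, (i ≠ j → E i j k = 1 ∨ E i j k = 2) ∧
      (i = j → E i j k = 2 * ℓ ∨ E i j k = 2 * ℓ + 1))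
    (f : ℕ → Fin ℓ → Fin ℓ → ℕ)
    (hf : ∀ N i j, f N i j =
      ∑ k ∈ Finset.range (N + 1), E i j k * θ ^ (Nat.floor (α ^ N) - Nat.floor (α ^ k)))
    (X : ℕ → Fin ℓ → EuclideanSpace ℝ (Fin (2 * ℓ)))
    (hX : ∀ N j i, X N j i = if h : (i : ℕ) < ℓ then
        (if (⟨i, h⟩ : Fin ℓ) = j then ((θ : ℝ) ^ Nat.floor (α ^ N)) else 0)
      else (f N ⟨(i : ℕ) - ℓ, by have := i.isLt; omega⟩ j : ℝ))
    (B : ℕ → Submodule ℝ (EuclideanSpace ℝ (Fin (2 * ℓ))))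
    (hB : ∀ N, B N = Submodule.span ℝ (Set.range (X N)))
    : ∀ N ≥ 1, IsRationalSubspace (B N) ∧ Module.finrank ℝ (B N) = ℓ ∧
      height (B N) ≤ (2 * (2 * (ℓ : ℝ) + 1) * Real.sqrt (2 * (ℓ : ℝ))) ^ ℓ *
        ((θ : ℝ) ^ Nat.floor (α ^ N)) ^ ℓ := by
  intro N _
  have hθℓ : 2 * ℓ + 1 < θ :=
    mod_cast (two_mul_add_one_le_factorial_mul_pow ℓ).trans_lt (by exact_mod_cast hθ)
  have hf_lt : ∀ i j, f N i j < θ ^ ⌊α ^ N⌋₊ := fun i j => by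
    refine hf N i j ▸ sum_mul_pow_floor_sub_lt hα.le (by omega) (fun k => ?_) N
    rcases eq_or_ne i j with h | h
    · rcases (hE i j k).2 h with h' | h' <;> omega
    · rcases (hE i j k).1 h with h' | h' <;> omega
  have hcoord : ∀ j i, ∃ z : ℕ, z ≤ θ ^ ⌊α ^ N⌋₊ ∧ X N j i = z := fun j i => by
    rw [hX]
    split_ifs
    exacts [⟨_, le_rfl, by push_cast; rfl⟩, ⟨0, Nat.zero_le _, by simp⟩, ⟨_, (hf_lt _ j).le, rfl⟩]
  have hint : ∀ j, IsIntVec (X N j) := fun j i => by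
    obtain ⟨z, -, hz⟩ := hcoord j i
    exact ⟨z, by rw [hz]; norm_cast⟩
  have hli : LinearIndependent ℝ (X N) :=
    linearIndependent_of_apply_eq_ite (Fin.castLE (by omega)) (c := (θ : ℝ) ^ ⌊α ^ N⌋₊)
      (pow_ne_zero _ (Nat.cast_ne_zero.2 (by omega))) fun j j' => by simp [hX]
  refine ⟨hB N ▸ isRationalSubspace_span_range hint,
    by rw [hB, finrank_span_eq_card hli, Fintype.card_fin], ?_⟩
  calc height (B N) ≤ gramDet (X N) := hB N ▸ height_span_le_gramDet hint hli
    _ ≤ √(ℓ ! * ((2 * ℓ : ℕ) * ((θ : ℝ) ^ ⌊α ^ N⌋₊) ^ 2) ^ ℓ) :=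
        gramDet_le_of_abs_le fun j i => by
          obtain ⟨z, hz, hXz⟩ := hcoord j i
          rw [hXz, Nat.abs_cast]
          exact (Nat.cast_le.2 hz).trans_eq (Nat.cast_pow _ _)
    _ ≤ _ := by
        push_cast
        exact sqrt_factorial_mul_pow_le ℓ (by positivity)
end
end

section
/- Let ℓ ≥ 1 and let F_1,…,F_ℓ be lines (1-dimensional subspaces) of ℝ^{2ℓ} spanning an ℓ-dimensional subspace F = F_1 ⊕ ⋯ ⊕ F_ℓ. Then there exists a constant c_F > 0, depending only on F_1,…,F_ℓ, such that for all lines B_1,…,B_ℓ of ℝ^{2ℓ} spanning an ℓ-dimensional subspace B = B_1 ⊕ ⋯ ⊕ B_ℓ, one has ψ_ℓ(F, B) ≤ c_F · Σ_{i=1}^{ℓ} ψ_1(F_i, B_i). -/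
open scoped BigOperators ENNReal

noncomputable section

/-!
Pick unit vectors `fᵢ ∈ Fᵢ`; they form a basis of `F`, so by equivalence of norms in finite
dimension the coordinates of `X = ∑ aᵢ fᵢ` satisfy `|aᵢ| ≤ C ‖X‖`. Given the `Bᵢ`, pick unit
vectors `bᵢ ∈ Bᵢ` with `⟪fᵢ, bᵢ⟫ ≥ 0`, so that `‖fᵢ - bᵢ‖ ≤ √2 ψ(fᵢ, bᵢ) ≤ √2 ψ₁(Fᵢ, Bᵢ)`.
Then `Y = ∑ aᵢ bᵢ` is a nonzero vector of `B` with
`ψ(X, Y) ≤ ‖X - Y‖ / ‖X‖ ≤ C √2 ∑ ψ₁(Fᵢ, Bᵢ)`, which bounds `ψ_ℓ(F, B)` using `F` itself as the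
`ℓ`-dimensional subspace.
-/

open Module Submodule Real RealInnerProductSpace

section Lines

variable {k V : Type*} [DivisionRing k] [AddCommGroup V] [Module k V] {ι : Type*}

lemma iSup_eq_span_range_of_finrank_eq_one {K : ι → Submodule k V} {v : ι → V}
    (hK : ∀ i, finrank k (K i) = 1) (hv : ∀ i, v i ∈ K i) (hv0 : ∀ i, v i ≠ 0) :
    ⨆ i, K i = span k (Set.range v) := by
  rw [span_range_eq_iSup]
  exact iSup_congr fun i => eq_span_singleton_of_mem_of_finrank_eq_one (hK i) (hv i) (hv0 i)

lemma linearIndependent_of_finrank_iSup_eq_card [Fintype ι] {K : ι → Submodule k V} {v : ι → V}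
    (hK : ∀ i, finrank k (K i) = 1) (hv : ∀ i, v i ∈ K i) (hv0 : ∀ i, v i ≠ 0)
    (hrank : finrank k ↥(⨆ i, K i) = Fintype.card ι) : LinearIndependent k v := by
  rw [linearIndependent_iff_card_eq_finrank_span, Set.finrank,
    ← iSup_eq_span_range_of_finrank_eq_one hK hv hv0, hrank]

end Lines

section Normed

variable {𝕜 E : Type*} [NontriviallyNormedField 𝕜] [NormedAddCommGroup E]
  [NormedSpace 𝕜 E] {ι : Type*} [Fintype ι]

lemma LinearIndependent.exists_norm_le_mul_norm_sum [CompleteSpace 𝕜] {v : ι → E}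
    (hv : LinearIndependent 𝕜 v) :
    ∃ C > 0, ∀ (a : ι → 𝕜) i, ‖a i‖ ≤ C * ‖∑ j, a j • v j‖ := by
  obtain ⟨C, hC, hCv⟩ := (Fintype.linearCombination 𝕜 v).exists_antilipschitzWith
    (LinearMap.ker_eq_bot.mpr hv.fintypeLinearCombination_injective)
  refine ⟨C, hC, fun a i => ?_⟩
  calc ‖a i‖ ≤ ‖a‖ := norm_le_pi_norm a i
    _ ≤ C * ‖Fintype.linearCombination 𝕜 v a‖ := ZeroHomClass.bound_of_antilipschitz _ hCv a
    _ = C * ‖∑ j, a j • v j‖ := by rw [Fintype.linearCombination_apply]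

lemma norm_sum_smul_sub_sum_smul_le (a : ι → 𝕜) (v w : ι → E) {M : ℝ} (ha : ∀ i, ‖a i‖ ≤ M) :
    ‖∑ i, a i • v i - ∑ i, a i • w i‖ ≤ M * ∑ i, ‖v i - w i‖ := by
  rw [← Finset.sum_sub_distrib, Finset.mul_sum]
  refine (norm_sum_le _ _).trans (Finset.sum_le_sum fun i _ => ?_)
  rw [← smul_sub, norm_smul]
  exact mul_le_mul_of_nonneg_right (ha i) (norm_nonneg _)

end Normed

lemma Submodule.exists_norm_eq_one_inner_nonneg {E : Type*} [NormedAddCommGroup E]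
    [InnerProductSpace ℝ E] {K : Submodule ℝ E} (hK : K ≠ ⊥) (v : E) :
    ∃ x ∈ K, ‖x‖ = 1 ∧ 0 ≤ ⟪v, x⟫ := by
  obtain ⟨y, hyK, hy0⟩ := K.exists_mem_ne_zero_of_ne_bot hK
  have hu : ‖y‖⁻¹ • y ∈ K := K.smul_mem _ hyK
  rcases le_total 0 ⟪v, ‖y‖⁻¹ • y⟫ with h | h
  · exact ⟨_, hu, norm_smul_inv_norm hy0, h⟩
  · refine ⟨_, K.neg_mem hu, by rw [norm_neg]; exact norm_smul_inv_norm hy0, ?_⟩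
    rw [inner_neg_right]
    linarith

section Psi

variable {n : ℕ}

lemma psiVec_zero_left (Y : EuclideanSpace ℝ (Fin n)) : psiVec 0 Y = 0 := by
  simp [psiVec]

lemma psiVec_zero_right (X : EuclideanSpace ℝ (Fin n)) : psiVec X 0 = 0 := by
  simp [psiVec]

lemma psiVec_le_one (X Y : EuclideanSpace ℝ (Fin n)) : psiVec X Y ≤ 1 := by
  refine div_le_one_of_le₀ ?_ (by positivity)
  calc √(‖X‖ ^ 2 * ‖Y‖ ^ 2 - ⟪X, Y⟫ ^ 2) ≤ √((‖X‖ * ‖Y‖) ^ 2) :=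
        Real.sqrt_le_sqrt (by nlinarith [sq_nonneg ⟪X, Y⟫])
    _ = ‖X‖ * ‖Y‖ := Real.sqrt_sq (by positivity)

lemma psiVec_smul_right (X Y : EuclideanSpace ℝ (Fin n)) {t : ℝ} (ht : t ≠ 0) :
    psiVec X (t • Y) = psiVec X Y := by
  have hrad : ‖X‖ ^ 2 * ‖t • Y‖ ^ 2 - ⟪X, t • Y⟫ ^ 2
      = |t| ^ 2 * (‖X‖ ^ 2 * ‖Y‖ ^ 2 - ⟪X, Y⟫ ^ 2) := by
    rw [norm_smul, real_inner_smul_right, Real.norm_eq_abs, mul_pow, sq_abs]; ring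
  rw [psiVec, psiVec, hrad, Real.sqrt_mul (by positivity), Real.sqrt_sq (abs_nonneg t), norm_smul,
    Real.norm_eq_abs, mul_left_comm, mul_div_mul_left _ _ (abs_ne_zero.mpr ht)]

lemma psiVec_le_norm_sub_div_norm (X Y : EuclideanSpace ℝ (Fin n)) :
    psiVec X Y ≤ ‖X - Y‖ / ‖X‖ := by
  rcases eq_or_ne X 0 with rfl | hX
  · rw [psiVec_zero_left, norm_zero, div_zero]
  rcases eq_or_ne Y 0 with rfl | hY
  · rw [psiVec_zero_right]; positivity
  have hX' : 0 < ‖X‖ := norm_pos_iff.mpr hX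
  have hY' : 0 < ‖Y‖ := norm_pos_iff.mpr hY
  -- `‖X‖²‖Y‖² - ⟪X,Y⟫² = ‖Y‖²‖X - Y‖² - (‖Y‖² - ⟪X,Y⟫)²`
  have hrad : ‖X‖ ^ 2 * ‖Y‖ ^ 2 - ⟪X, Y⟫ ^ 2 ≤ (‖Y‖ * ‖X - Y‖) ^ 2 := by
    rw [mul_pow, norm_sub_sq_real]; nlinarith [sq_nonneg (‖Y‖ ^ 2 - ⟪X, Y⟫)]
  rw [psiVec, div_le_div_iff₀ (by positivity) hX']
  calc √(‖X‖ ^ 2 * ‖Y‖ ^ 2 - ⟪X, Y⟫ ^ 2) * ‖X‖ ≤ √((‖Y‖ * ‖X - Y‖) ^ 2) * ‖X‖ := by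
        gcongr
    _ = ‖X - Y‖ * (‖X‖ * ‖Y‖) := by rw [Real.sqrt_sq (by positivity)]; ring

lemma norm_sub_le_sqrt_two_mul_psiVec {f b : EuclideanSpace ℝ (Fin n)} (hf : ‖f‖ = 1)
    (hb : ‖b‖ = 1) (hfb : 0 ≤ ⟪f, b⟫) : ‖f - b‖ ≤ √2 * psiVec f b := by
  have hfb' : ⟪f, b⟫ ≤ 1 := by simpa [hf, hb] using real_inner_le_norm f b
  calc ‖f - b‖ = √(2 - 2 * ⟪f, b⟫) := by
        rw [← Real.sqrt_sq (norm_nonneg _), norm_sub_sq_real, hf, hb]; ring_nf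
    _ ≤ √(2 * (1 - ⟪f, b⟫ ^ 2)) := Real.sqrt_le_sqrt (by nlinarith)
    _ = √2 * psiVec f b := by rw [Real.sqrt_mul zero_le_two]; simp [psiVec, hf, hb]

lemma psiVec_sum_smul_le {ι : Type*} [Fintype ι] (a : ι → ℝ) (v w : ι → EuclideanSpace ℝ (Fin n))
    {C : ℝ} (hC : 0 ≤ C) (ha : ∀ i, ‖a i‖ ≤ C * ‖∑ j, a j • v j‖) :
    psiVec (∑ i, a i • v i) (∑ i, a i • w i) ≤ C * ∑ i, ‖v i - w i‖ := by
  set X := ∑ i, a i • v i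
  rcases eq_or_ne X 0 with hX | hX
  · rw [hX, psiVec_zero_left]; positivity
  calc psiVec X (∑ i, a i • w i) ≤ ‖X - ∑ i, a i • w i‖ / ‖X‖ := psiVec_le_norm_sub_div_norm _ _
    _ ≤ C * ‖X‖ * (∑ i, ‖v i - w i‖) / ‖X‖ := by
        gcongr; exact norm_sum_smul_sub_sum_smul_le a v w ha
    _ = C * ∑ i, ‖v i - w i‖ := by field_simp

lemma psiSub_nonneg (j : ℕ) (A B : Submodule ℝ (EuclideanSpace ℝ (Fin n))) : 0 ≤ psiSub j A B :=
  Real.sInf_nonneg fun _ hl => hl.1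

lemma psiSub_le {j : ℕ} {A B A' : Submodule ℝ (EuclideanSpace ℝ (Fin n))} (hA' : A' ≤ A)
    (hrank : finrank ℝ A' = j) {l : ℝ} (hl : 0 ≤ l)
    (h : ∀ X ∈ A', X ≠ 0 → ∃ Y ∈ B, Y ≠ 0 ∧ psiVec X Y ≤ l) : psiSub j A B ≤ l :=
  csInf_le ⟨0, fun _ hl => hl.1⟩ ⟨hl, A', hA', hrank, h⟩

lemma psiVec_le_psiSub_one {A B : Submodule ℝ (EuclideanSpace ℝ (Fin n))}
    (hA : finrank ℝ A = 1) (hB : finrank ℝ B = 1) {X Y : EuclideanSpace ℝ (Fin n)}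
    (hXA : X ∈ A) (hX0 : X ≠ 0) (hYB : Y ∈ B) (hY0 : Y ≠ 0) : psiVec X Y ≤ psiSub 1 A B := by
  refine le_csInf
    ⟨1, zero_le_one, A, le_rfl, hA, fun X' _ _ => ⟨Y, hYB, hY0, psiVec_le_one X' Y⟩⟩ ?_
  rintro l ⟨-, A', hA'A, hA', h⟩
  obtain ⟨Y', hY'B, hY'0, hl⟩ :=
    h X ((eq_of_le_of_finrank_le hA'A (by rw [hA, hA'])).symm ▸ hXA) hX0
  rw [eq_span_singleton_of_mem_of_finrank_eq_one hB hYB hY0, mem_span_singleton] at hY'B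
  obtain ⟨t, rfl⟩ := hY'B
  rwa [psiVec_smul_right X Y (by rintro rfl; simp at hY'0)] at hl

end Psi

theorem statement18_general (ℓ : ℕ)
    (F : Fin ℓ → Submodule ℝ (EuclideanSpace ℝ (Fin (2 * ℓ))))
    (hF1 : ∀ i, Module.finrank ℝ (F i) = 1)
    (hFrank : Module.finrank ℝ ↥(⨆ i, F i) = ℓ) :
    ∃ c > 0, ∀ B : Fin ℓ → Submodule ℝ (EuclideanSpace ℝ (Fin (2 * ℓ))),
      (∀ i, Module.finrank ℝ (B i) = 1) → Module.finrank ℝ ↥(⨆ i, B i) = ℓ →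
      psiSub ℓ (⨆ i, F i) (⨆ i, B i) ≤ c * ∑ i, psiSub 1 (F i) (B i) := by
  have ne_bot {K : Submodule ℝ (EuclideanSpace ℝ (Fin (2 * ℓ)))} (hK : finrank ℝ K = 1) :
      K ≠ ⊥ := by rintro rfl; simp at hK
  choose f hfF hf1 _ using fun i => (F i).exists_norm_eq_one_inner_nonneg (ne_bot (hF1 i)) 0
  have hf0 : ∀ i, f i ≠ 0 := fun i => norm_ne_zero_iff.mp (by simp [hf1 i])
  obtain ⟨C, hC, hCf⟩ := (linearIndependent_of_finrank_iSup_eq_card hF1 hfF hf0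
    (by rw [hFrank, Fintype.card_fin])).exists_norm_le_mul_norm_sum
  refine ⟨C * √2, by positivity, fun B hB1 hBrank => ?_⟩
  choose b hbB hb1 hfb using fun i => (B i).exists_norm_eq_one_inner_nonneg (ne_bot (hB1 i)) (f i)
  have hb0 : ∀ i, b i ≠ 0 := fun i => norm_ne_zero_iff.mp (by simp [hb1 i])
  have hb := linearIndependent_of_finrank_iSup_eq_card hB1 hbB hb0
    (by rw [hBrank, Fintype.card_fin])
  have hfb_le : ∀ i, ‖f i - b i‖ ≤ √2 * psiSub 1 (F i) (B i) := fun i =>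
    (norm_sub_le_sqrt_two_mul_psiVec (hf1 i) (hb1 i) (hfb i)).trans <|
      mul_le_mul_of_nonneg_left
        (psiVec_le_psiSub_one (hF1 i) (hB1 i) (hfF i) (hf0 i) (hbB i) (hb0 i)) (by positivity)
  refine psiSub_le le_rfl hFrank
    (mul_nonneg (by positivity) (Finset.sum_nonneg fun i _ => psiSub_nonneg 1 _ _))
    fun X hX hX0 => ?_
  rw [iSup_eq_span_range_of_finrank_eq_one hF1 hfF hf0, mem_span_range_iff_exists_fun] at hX
  obtain ⟨a, rfl⟩ := hX
  refine ⟨∑ i, a i • b i, sum_mem fun i _ => smul_mem _ _ (mem_iSup_of_mem i (hbB i)), ?_, ?_⟩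
  · intro hY
    simp [Fintype.linearIndependent_iff.mp hb a hY] at hX0
  · calc psiVec (∑ i, a i • f i) (∑ i, a i • b i) ≤ C * ∑ i, ‖f i - b i‖ :=
          psiVec_sum_smul_le a f b hC.le (hCf a)
      _ ≤ C * ∑ i, √2 * psiSub 1 (F i) (B i) := by gcongr with i; exact hfb_le i
      _ = C * √2 * ∑ i, psiSub 1 (F i) (B i) := by rw [← Finset.mul_sum, mul_assoc]

/-- **Lemma 4.1.** Given lines `F₁,…,F_ℓ` of `ℝ^{2ℓ}` spanning an `ℓ`-dimensional subspace `F`,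
there is `c_F > 0` such that for all lines `B₁,…,B_ℓ` spanning an `ℓ`-dimensional subspace `B`,
`ψ_ℓ(F, B) ≤ c_F · Σᵢ ψ₁(Fᵢ, Bᵢ)`. -/
theorem statement18 (ℓ : ℕ) (hℓ : 1 ≤ ℓ)
    (F : Fin ℓ → Submodule ℝ (EuclideanSpace ℝ (Fin (2 * ℓ))))
    (hF1 : ∀ i, Module.finrank ℝ (F i) = 1)
    (hFrank : Module.finrank ℝ ↥(⨆ i, F i) = ℓ) :
    ∃ c > 0, ∀ B : Fin ℓ → Submodule ℝ (EuclideanSpace ℝ (Fin (2 * ℓ))),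
      (∀ i, Module.finrank ℝ (B i) = 1) → Module.finrank ℝ ↥(⨆ i, B i) = ℓ →
      psiSub ℓ (⨆ i, F i) (⨆ i, B i) ≤ c * ∑ i, psiSub 1 (F i) (B i) :=
  statement18_general ℓ F hF1 hFrank
end
end
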